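/- Reduction to the two-dimensional map: fix ε ∈ ℝ and let (I₁(n), θ₁(n), I₂(n), θ₂(n)), n = 0, 1, 2, …, be an orbit of the map T (assumed to avoid the singular set where cos(π(I₁+θ₁−I₂−θ₂)) = 0). Define p_n := ⟪θ₁(n−1) − θ₂(n−1)⟫ and q_n := ⟪θ₁(n) − θ₂(n)⟫ for n ≥ 1. Then for every n ≥ 1, (p_{n+1}, q_{n+1}) = T̃_ε(p_n, q_n), i.e., the reduced variables evolve under T̃_ε(p, q) = (q, ⟪2q − p − 2ε·tan(πq)⟫). -/
import Mathlib


open Real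

/-- `rmod x` is the unique representative of `x` modulo 1 lying in `[-1/2, 1/2)`. -/
noncomputable def rmod (x : ℝ) : ℝ := x - ⌊x + 1/2⌋

/-- The reduced two-dimensional map `T̃_ε (p, q) = (q, ⟪2q - p - 2ε tan(π q)⟫)`. -/
noncomputable def Ttilde (ε : ℝ) : ℝ × ℝ → ℝ × ℝ := fun x =>
  (rmod x.2, rmod (2 * x.2 - x.1 - 2 * ε * Real.tan (Real.pi * x.2)))

lemma rmod_congr' (x y : ℝ) (k : ℤ) (h : x = y + k) : rmod x = rmod y := by
  subst h
  unfold rmod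
  have : y + (k : ℝ) + 1/2 = (y + 1/2) + (k : ℝ) := by ring
  rw [this, Int.floor_add_intCast]
  push_cast
  ring

lemma rmod_sub_int (x : ℝ) : ∃ k : ℤ, rmod x = x - k := ⟨⌊x + 1/2⌋, rfl⟩

lemma tan_pi_congr (x y : ℝ) (k : ℤ) (h : x = y + k) :
    Real.tan (Real.pi * x) = Real.tan (Real.pi * y) := by
  subst h
  have : Real.pi * (y + k) = Real.pi * y + (k : ℝ) * Real.pi := by ring
  rw [this, Real.tan_periodic.int_mul k]

theorem stmt16 (ε : ℝ) (I1 θ1 I2 θ2 : ℕ → ℝ)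
    (hθ1 : θ1 0 ∈ Set.Ico (-(1:ℝ)/2) (1/2)) (hθ2 : θ2 0 ∈ Set.Ico (-(1:ℝ)/2) (1/2))
    (hsing : ∀ n : ℕ, Real.cos (Real.pi * (I1 n + θ1 n - I2 n - θ2 n)) ≠ 0)
    (horb : ∀ n : ℕ,
      I1 (n+1) = I1 n - ε * Real.tan (Real.pi * (I1 n + θ1 n - I2 n - θ2 n)) ∧
      θ1 (n+1) = rmod (I1 n + θ1 n) ∧
      I2 (n+1) = I2 n + ε * Real.tan (Real.pi * (I1 n + θ1 n - I2 n - θ2 n)) ∧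
      θ2 (n+1) = rmod (I2 n + θ2 n)) :
    ∀ n : ℕ,
      Ttilde ε (rmod (θ1 n - θ2 n), rmod (θ1 (n+1) - θ2 (n+1))) =
        (rmod (θ1 (n+1) - θ2 (n+1)), rmod (θ1 (n+2) - θ2 (n+2))) := by
  intro n
  obtain ⟨hI1, hθ1', hI2, hθ2'⟩ := horb n
  obtain ⟨hI1', hθ1'', hI2', hθ2''⟩ := horb (n+1)
  obtain ⟨a, ha⟩ := rmod_sub_int (I1 n + θ1 n)
  obtain ⟨b, hb⟩ := rmod_sub_int (I2 n + θ2 n)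
  obtain ⟨c, hc⟩ := rmod_sub_int (I1 (n+1) + θ1 (n+1))
  obtain ⟨d, hd⟩ := rmod_sub_int (I2 (n+1) + θ2 (n+1))
  obtain ⟨e, he⟩ := rmod_sub_int (θ1 (n+1) - θ2 (n+1))
  obtain ⟨f, hf⟩ := rmod_sub_int (θ1 n - θ2 n)
  set t := Real.tan (Real.pi * (I1 n + θ1 n - I2 n - θ2 n)) with ht
  have hq : θ1 (n+1) - θ2 (n+1) = (I1 n + θ1 n - I2 n - θ2 n) + (b - a : ℤ) := by
    rw [hθ1', hθ2', ha, hb]; push_cast; ring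
  have htan : Real.tan (Real.pi * rmod (θ1 (n+1) - θ2 (n+1))) = t := by
    apply tan_pi_congr _ _ (b - a - e)
    rw [he, hq]; push_cast; ring
  unfold Ttilde
  simp only [Prod.mk.injEq]
  constructor
  · exact rmod_congr' _ _ (-e) (by rw [he]; push_cast; ring)
  · rw [htan]
    apply rmod_congr' _ _ (-2*e + f - a + b + c - d)
    rw [he, hf]
    have hB : θ1 (n+2) - θ2 (n+2) =
        (I1 n - I2 n - 2*ε*t) + (θ1 (n+1) - θ2 (n+1)) - (c : ℝ) + d := by
      rw [hθ1'', hθ2'', hc, hd, hI1, hI2]; ring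
    rw [hB, hq]
    push_cast; ring
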